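/- arXiv:1212.0506 — 3 statements merged into one kernel-verified Lean document; each statement's English description precedes it below -/
import Mathlib

section
/- Let n, m ∈ ℕ and let U be a unitary 2^n × 2^n complex matrix. Suppose there exists a matrix U′ in the Clifford+T group on n+m qubits such that U′(v ⊗ e₀) = (Uv) ⊗ e₀ for all v ∈ ℂ^(2^n), where e₀ ∈ ℂ^(2^m) is the first standard basis vector and ⊗ denotes the Kronecker product. Then every entry of U belongs to the ring 𝔻[ω] = ℤ[1/√2, i]. -/
/-!
`𝔻[ω]` is a subring of `ℂ` closed under conjugation, so the unitary matrices with entries in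
`𝔻[ω]` form a group. All generators of the Clifford+T group have entries in `𝔻[ω]`, hence so
does every Clifford+T operator `U'`. Feeding `|j⟩` to `U'` with the ancillas in `|0⋯0⟩` and
reading off the `|i, 0⋯0⟩` coordinate gives `U i j = ⟨i, 0⋯0| U' |j, 0⋯0⟩`.
-/

noncomputable section

/-- The eighth root of unity `ω = e^{iπ/4} = (1+i)/√2`. -/
def ω : ℂ := (1 + Complex.I) / Real.sqrt 2

/-- A rational number is dyadic if it has the form `a / 2^n` with `a ∈ ℤ`, `n ∈ ℕ`. -/
def IsDyadic (q : ℚ) : Prop := ∃ (a : ℤ) (n : ℕ), q = a / 2 ^ n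

/-- Membership in the ring `𝔻[ω] = ℤ[1/√2, i]`: complex numbers of the form
`aω³ + bω² + cω + d` with `a, b, c, d` dyadic rationals. -/
def inDω (t : ℂ) : Prop :=
  ∃ a b c d : ℚ, IsDyadic a ∧ IsDyadic b ∧ IsDyadic c ∧ IsDyadic d ∧
    t = (a : ℂ) * ω ^ 3 + (b : ℂ) * ω ^ 2 + (c : ℂ) * ω + (d : ℂ)

/-- Membership in the ring `ℤ[ω]`: complex numbers of the form
`aω³ + bω² + cω + d` with `a, b, c, d ∈ ℤ`. -/
def inZω (t : ℂ) : Prop :=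
  ∃ a b c d : ℤ, t = (a : ℂ) * ω ^ 3 + (b : ℂ) * ω ^ 2 + (c : ℂ) * ω + (d : ℂ)

/-- The Hadamard gate. -/
def Hmat : Matrix (Fin 2) (Fin 2) ℂ := ((Real.sqrt 2 : ℂ))⁻¹ • !![1, 1; 1, -1]

/-- The phase gate `S`. -/
def Smat : Matrix (Fin 2) (Fin 2) ℂ := !![1, 0; 0, Complex.I]

/-- The `T` gate. -/
def Tmat : Matrix (Fin 2) (Fin 2) ℂ := !![1, 0; 0, ω]

/-- The `X` (not) gate. -/
def Xmat : Matrix (Fin 2) (Fin 2) ℂ := !![0, 1; 1, 0]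

/-- The controlled-not gate, as a matrix on two qubits: it sends `|a,b⟩` to `|a, a+b⟩`. -/
def CNOTmat : Matrix (Fin 2 × Fin 2) (Fin 2 × Fin 2) ℂ :=
  Matrix.of fun p q => if p.1 = q.1 ∧ p.2 = q.1 + q.2 then 1 else 0

/-- The operator obtained by applying the single-qubit gate `G` to the `j`-th of `n` qubits
(and the identity to the remaining factors); this is `P_σ⁻¹ (G ⊗ I) P_σ` written entrywise. -/
def app1 {n : ℕ} (G : Matrix (Fin 2) (Fin 2) ℂ) (j : Fin n) :
    Matrix (Fin n → Fin 2) (Fin n → Fin 2) ℂ :=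
  Matrix.of fun x y => if ∀ i, i ≠ j → x i = y i then G (x j) (y j) else 0

/-- The operator obtained by applying the two-qubit gate `G` to the ordered pair `(j, l)` of
distinct qubits among `n` qubits (and the identity to the remaining factors). -/
def app2 {n : ℕ} (G : Matrix (Fin 2 × Fin 2) (Fin 2 × Fin 2) ℂ) (j l : Fin n) :
    Matrix (Fin n → Fin 2) (Fin n → Fin 2) ℂ :=
  Matrix.of fun x y => if ∀ i, i ≠ j → i ≠ l → x i = y i then G (x j, x l) (y j, y l) else 0

/-- The Clifford+T group on `n` qubits: the subgroup of the unitary group on `(ℂ²)^{⊗n}`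
generated by the scalar `ω`, the gates `H`, `S`, `T` applied to any single qubit, and
CNOT applied to any ordered pair of distinct qubits. -/
def CliffordT (n : ℕ) : Subgroup (Matrix.unitaryGroup (Fin n → Fin 2) ℂ) :=
  Subgroup.closure
    {U | (U : Matrix (Fin n → Fin 2) (Fin n → Fin 2) ℂ)
            = ω • (1 : Matrix (Fin n → Fin 2) (Fin n → Fin 2) ℂ)
      ∨ (∃ j, (U : Matrix (Fin n → Fin 2) (Fin n → Fin 2) ℂ) = app1 Hmat j)
      ∨ (∃ j, (U : Matrix (Fin n → Fin 2) (Fin n → Fin 2) ℂ) = app1 Smat j)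
      ∨ (∃ j, (U : Matrix (Fin n → Fin 2) (Fin n → Fin 2) ℂ) = app1 Tmat j)
      ∨ (∃ j l, j ≠ l ∧ (U : Matrix (Fin n → Fin 2) (Fin n → Fin 2) ℂ) = app2 CNOTmat j l)}

/-- The Kronecker (tensor) product of a vector on `n` qubits with a vector on `m` qubits. -/
def tensorVec {n m : ℕ} (v : (Fin n → Fin 2) → ℂ) (w : (Fin m → Fin 2) → ℂ) :
    (Fin (n + m) → Fin 2) → ℂ :=
  fun x => v (fun i => x (Fin.castAdd m i)) * w (fun i => x (Fin.natAdd n i))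

/-- The first standard basis vector `e₀ = |0⋯0⟩` of `ℂ^(2^m)`. -/
def e0 (m : ℕ) : (Fin m → Fin 2) → ℂ := fun x => if x = fun _ => 0 then 1 else 0

open Matrix

lemma ofReal_sqrt_two_ne_zero : (Real.sqrt 2 : ℂ) ≠ 0 := by
  norm_cast; positivity

lemma ofReal_sqrt_two_sq : (Real.sqrt 2 : ℂ) ^ 2 = 2 := by
  norm_cast; rw [Real.sq_sqrt zero_le_two]

lemma ω_sq : ω ^ 2 = Complex.I := by
  rw [ω, div_pow, ofReal_sqrt_two_sq]; linear_combination Complex.I_sq / 2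

lemma ω_pow_four : ω ^ 4 = -1 := by
  rw [show ω ^ 4 = (ω ^ 2) ^ 2 by ring, ω_sq, Complex.I_sq]

lemma star_ω : star ω = -ω ^ 3 := by
  have := ofReal_sqrt_two_ne_zero
  have hstar : star ω = (1 - Complex.I) / Real.sqrt 2 := by
    simp [ω, Complex.ext_iff]
  rw [hstar, show ω ^ 3 = ω ^ 2 * ω by ring, ω_sq, ω]
  field_simp
  linear_combination Complex.I_sq

lemma inv_sqrt_two_eq : ((Real.sqrt 2 : ℂ))⁻¹ = (ω - ω ^ 3) / 2 := by
  have := ofReal_sqrt_two_ne_zero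
  rw [show ω ^ 3 = ω ^ 2 * ω by ring, ω_sq, ω]
  field_simp
  linear_combination Complex.I_sq

def dyadicSubring : Subring ℚ where
  carrier := {q | IsDyadic q}
  zero_mem' := ⟨0, 0, by norm_num⟩
  one_mem' := ⟨1, 0, by norm_num⟩
  add_mem' := by
    rintro _ _ ⟨a, k, rfl⟩ ⟨b, l, rfl⟩
    exact ⟨a * 2 ^ l + b * 2 ^ k, k + l, by push_cast; field_simp; ring⟩
  mul_mem' := by
    rintro _ _ ⟨a, k, rfl⟩ ⟨b, l, rfl⟩
    exact ⟨a * b, k + l, by push_cast; field_simp; ring⟩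
  neg_mem' := by
    rintro _ ⟨a, k, rfl⟩
    exact ⟨-a, k, by push_cast; ring⟩

lemma half_mem_dyadicSubring : (1 / 2 : ℚ) ∈ dyadicSubring := ⟨1, 1, by norm_num⟩

/-- `𝔻[ω]` is closed under products because `ω⁴ = -1` folds higher powers of `ω` back onto
`1, ω, ω², ω³`. -/
def Dω : Subring ℂ where
  carrier := {t | ∃ a b c d : ℚ, a ∈ dyadicSubring ∧ b ∈ dyadicSubring ∧
    c ∈ dyadicSubring ∧ d ∈ dyadicSubring ∧
    t = (a : ℂ) * ω ^ 3 + (b : ℂ) * ω ^ 2 + (c : ℂ) * ω + (d : ℂ)}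
  zero_mem' := ⟨0, 0, 0, 0, zero_mem _, zero_mem _, zero_mem _, zero_mem _, by simp⟩
  one_mem' := ⟨0, 0, 0, 1, zero_mem _, zero_mem _, zero_mem _, one_mem _, by simp⟩
  add_mem' := by
    rintro _ _ ⟨a, b, c, d, ha, hb, hc, hd, rfl⟩
      ⟨a', b', c', d', ha', hb', hc', hd', rfl⟩
    exact ⟨a + a', b + b', c + c', d + d', add_mem ha ha', add_mem hb hb', add_mem hc hc',
      add_mem hd hd', by push_cast; ring⟩
  mul_mem' := by
    rintro _ _ ⟨a, b, c, d, ha, hb, hc, hd, rfl⟩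
      ⟨a', b', c', d', ha', hb', hc', hd', rfl⟩
    refine ⟨a * d' + b * c' + c * b' + d * a', b * d' + c * c' + d * b' - a * a',
      c * d' + d * c' - a * b' - b * a', d * d' - a * c' - b * b' - c * a', ?_, ?_, ?_, ?_, ?_⟩
    iterate 4 apply_rules [add_mem, sub_mem, mul_mem]
    push_cast
    linear_combination
      ((a : ℂ) * a' * ω ^ 2 + (a * b' + b * a') * ω + (a * c' + b * b' + c * a')) * ω_pow_four
  neg_mem' := by
    rintro _ ⟨a, b, c, d, ha, hb, hc, hd, rfl⟩
    exact ⟨-a, -b, -c, -d, neg_mem ha, neg_mem hb, neg_mem hc, neg_mem hd, by push_cast; ring⟩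

lemma mem_Dω {t : ℂ} : t ∈ Dω ↔ inDω t := Iff.rfl

lemma star_mem_Dω {t : ℂ} (ht : t ∈ Dω) : star t ∈ Dω := by
  obtain ⟨a, b, c, d, ha, hb, hc, hd, rfl⟩ := ht
  refine ⟨-c, -b, -a, d, neg_mem hc, neg_mem hb, neg_mem ha, hd, ?_⟩
  simp only [star_add, star_mul, star_pow, star_ratCast, star_ω]
  push_cast
  linear_combination ((a : ℂ) * (ω - ω ^ 5) + b * ω ^ 2) * ω_pow_four

lemma ratCast_mem_Dω {q : ℚ} (hq : q ∈ dyadicSubring) : (q : ℂ) ∈ Dω :=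
  ⟨0, 0, 0, q, zero_mem _, zero_mem _, zero_mem _, hq, by simp⟩

lemma ω_mem_Dω : ω ∈ Dω := ⟨0, 0, 1, 0, zero_mem _, zero_mem _, one_mem _, zero_mem _, by simp⟩

lemma I_mem_Dω : Complex.I ∈ Dω := ω_sq ▸ pow_mem ω_mem_Dω 2

lemma inv_sqrt_two_mem_Dω : ((Real.sqrt 2 : ℂ))⁻¹ ∈ Dω := by
  rw [inv_sqrt_two_eq, div_eq_mul_one_div]
  exact mul_mem (sub_mem ω_mem_Dω (pow_mem ω_mem_Dω 3))
    (by simpa using ratCast_mem_Dω half_mem_dyadicSubring)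

def unitaryGroupWithEntriesIn {ι α : Type*} [Fintype ι] [DecidableEq ι] [CommRing α]
    [StarRing α] (R : Subring α) (hR : ∀ x ∈ R, star x ∈ R) :
    Subgroup (unitaryGroup ι α) where
  carrier := {A | ∀ i j, (A : Matrix ι ι α) i j ∈ R}
  one_mem' i j := by
    simp only [UnitaryGroup.one_val, one_apply]
    split_ifs
    exacts [one_mem R, zero_mem R]
  mul_mem' {A B} hA hB i j := by
    simp only [UnitaryGroup.mul_val, mul_apply]
    exact sum_mem fun k _ => mul_mem (hA i k) (hB k j)
  inv_mem' {A} hA i j := by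
    simp only [UnitaryGroup.inv_val, star_apply]
    exact hR _ (hA j i)

section Gates

variable {n : ℕ} {R : Subring ℂ}

lemma app1_apply_mem {G : Matrix (Fin 2) (Fin 2) ℂ} (hG : ∀ p q, G p q ∈ R) (j : Fin n)
    (x y : Fin n → Fin 2) : app1 G j x y ∈ R := by
  rw [app1, of_apply]
  split_ifs
  exacts [hG _ _, zero_mem R]

lemma app2_apply_mem {G : Matrix (Fin 2 × Fin 2) (Fin 2 × Fin 2) ℂ} (hG : ∀ p q, G p q ∈ R)
    (j l : Fin n) (x y : Fin n → Fin 2) : app2 G j l x y ∈ R := by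
  rw [app2, of_apply]
  split_ifs
  exacts [hG _ _, zero_mem R]

end Gates

lemma Hmat_apply_mem_Dω (p q : Fin 2) : Hmat p q ∈ Dω := by
  fin_cases p <;> fin_cases q <;> simp [Hmat, inv_sqrt_two_mem_Dω]

lemma Smat_apply_mem_Dω (p q : Fin 2) : Smat p q ∈ Dω := by
  fin_cases p <;> fin_cases q <;> simp [Smat, I_mem_Dω, zero_mem, one_mem]

lemma Tmat_apply_mem_Dω (p q : Fin 2) : Tmat p q ∈ Dω := by
  fin_cases p <;> fin_cases q <;> simp [Tmat, ω_mem_Dω, zero_mem, one_mem]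

lemma CNOTmat_apply_mem_Dω (p q : Fin 2 × Fin 2) : CNOTmat p q ∈ Dω := by
  rw [CNOTmat, of_apply]
  split_ifs
  exacts [one_mem _, zero_mem _]

lemma CliffordT_le_unitaryGroupWithEntriesIn_Dω (N : ℕ) :
    CliffordT N ≤ unitaryGroupWithEntriesIn Dω fun _ => star_mem_Dω := by
  rw [CliffordT, Subgroup.closure_le]
  rintro V (hV | ⟨j, hV⟩ | ⟨j, hV⟩ | ⟨j, hV⟩ | ⟨j, l, -, hV⟩) x y <;> rw [hV]
  · rw [Matrix.smul_apply, one_apply]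
    split_ifs
    exacts [by simpa using ω_mem_Dω, by simp [zero_mem]]
  · exact app1_apply_mem Hmat_apply_mem_Dω j x y
  · exact app1_apply_mem Smat_apply_mem_Dω j x y
  · exact app1_apply_mem Tmat_apply_mem_Dω j x y
  · exact app2_apply_mem CNOTmat_apply_mem_Dω j l x y

section Ancilla

variable {n m : ℕ}

lemma e0_eq_single : e0 m = Pi.single 0 1 := by
  funext x
  simp only [e0, Pi.single_apply]
  rfl

lemma tensorVec_append (v : (Fin n → Fin 2) → ℂ) (w : (Fin m → Fin 2) → ℂ)
    (x : Fin n → Fin 2) (z : Fin m → Fin 2) : tensorVec v w (Fin.append x z) = v x * w z := by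
  simp [tensorVec]

lemma tensorVec_single_one (a : Fin n → Fin 2) (b : Fin m → Fin 2) :
    tensorVec (Pi.single a 1) (Pi.single b 1) = Pi.single (Fin.append a b) 1 := by
  funext y
  obtain ⟨x, z, rfl⟩ : ∃ x z, y = Fin.append x z := ⟨_, _, Fin.append_castAdd_natAdd.symm⟩
  have hinj : Fin.append x z = Fin.append a b ↔ x = a ∧ z = b :=
    (Fin.appendEquiv n m).injective.eq_iff.trans Prod.mk_inj
  simp only [tensorVec_append, Pi.single_apply, hinj, ite_zero_mul_ite_zero, mul_one]

lemma apply_eq_of_mulVec_tensorVec_e0 {U : Matrix (Fin n → Fin 2) (Fin n → Fin 2) ℂ}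
    {U' : Matrix (Fin (n + m) → Fin 2) (Fin (n + m) → Fin 2) ℂ}
    (h : ∀ v, U' *ᵥ tensorVec v (e0 m) = tensorVec (U *ᵥ v) (e0 m)) (i j : Fin n → Fin 2) :
    U i j = U' (Fin.append i 0) (Fin.append j 0) := by
  have hij := congrFun (h (Pi.single j 1)) (Fin.append i 0)
  rw [e0_eq_single, tensorVec_single_one, mulVec_single_one, tensorVec_append,
    mulVec_single_one] at hij
  simpa using hij.symm

end Ancilla

theorem stmt0_general (n m : ℕ) (U : Matrix (Fin n → Fin 2) (Fin n → Fin 2) ℂ)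
    (h : ∃ U' ∈ CliffordT (n + m), ∀ v : (Fin n → Fin 2) → ℂ,
      Matrix.mulVec (U' : Matrix (Fin (n + m) → Fin 2) (Fin (n + m) → Fin 2) ℂ)
          (tensorVec v (e0 m))
        = tensorVec (U.mulVec v) (e0 m)) :
    ∀ i j, inDω (U i j) := by
  obtain ⟨U', hU', hU'U⟩ := h
  intro i j
  rw [← mem_Dω, apply_eq_of_mulVec_tensorVec_e0 hU'U]
  exact CliffordT_le_unitaryGroupWithEntriesIn_Dω (n + m) hU' _ _

/-- If a unitary `2^n × 2^n` matrix `U` is implemented by a Clifford+T operator on `n+m`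
qubits with `m` ancillas initialized and finalized in state `|0⟩`, then every entry of `U`
belongs to the ring `𝔻[ω] = ℤ[1/√2, i]`. -/
theorem stmt0 (n m : ℕ) (U : Matrix (Fin n → Fin 2) (Fin n → Fin 2) ℂ)
    (hU : U ∈ Matrix.unitaryGroup (Fin n → Fin 2) ℂ)
    (h : ∃ U' ∈ CliffordT (n + m), ∀ v : (Fin n → Fin 2) → ℂ,
      Matrix.mulVec (U' : Matrix (Fin (n + m) → Fin 2) (Fin (n + m) → Fin 2) ℂ)
          (tensorVec v (e0 m))
        = tensorVec (U.mulVec v) (e0 m)) :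
    ∀ i j, inDω (U i j) :=
  stmt0_general n m U h
end
end

section
/- For every t ∈ ℤ[ω], the element t̄·t (where t̄ is the complex conjugate of t) is congruent modulo 2ℤ[ω] to exactly one of 0, 1, or ω + ω³. That is, exactly one of (t̄t)/2 ∈ ℤ[ω], (t̄t − 1)/2 ∈ ℤ[ω], or (t̄t − ω − ω³)/2 ∈ ℤ[ω] holds. -/
noncomputable section

/-!
Write `t = aω³ + bω² + cω + d`. Since `ω⁴ = -1` and `conj ω = -ω³`, one computes
`t̄t = Aω³ - Aω + N` with `A = ad - ab - bc - cd` and `N = a² + b² + c² + d²`.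
The numbers `1, ω, ω², ω³` are linearly independent over `ℚ` (as `√2 ω = 1 + i` and `√2` is
irrational), so an element of `ℤ[ω]` is divisible by `2` exactly when its four coordinates are
even. Hence the class of `t̄t` modulo `2` is read off from the parities of `A` and `N`:
`0`, `1` or `ω + ω³` when they are (even, even), (even, odd) or (odd, even). Both odd is
impossible, because `A ≡ (a + c)(b + d)` and `N ≡ a + b + c + d` modulo `2`.
-/

theorem int_add_int_mul_sqrt_two_eq_zero {x y : ℤ} (h : (x : ℝ) + y * √2 = 0) :
    x = 0 ∧ y = 0 := by
  obtain rfl : y = 0 := by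
    by_contra hy
    exact ((irrational_sqrt_two.intCast_mul hy).intCast_add x).ne_zero h
  exact ⟨by simpa using h, rfl⟩

namespace Zω

theorem ω_sq : ω ^ 2 = Complex.I := by
  rw [ω, div_pow, ← Complex.ofReal_pow, Real.sq_sqrt zero_le_two]
  push_cast
  linear_combination (1 / 2 : ℂ) * Complex.I_sq

theorem ω_pow_four : ω ^ 4 = -1 := by
  rw [show ω ^ 4 = (ω ^ 2) ^ 2 by ring, ω_sq, Complex.I_sq]

theorem sqrt_two_mul_ω : (√2 : ℂ) * ω = 1 + Complex.I := by
  have hs : (√2 : ℂ) ≠ 0 := by exact_mod_cast Real.sqrt_ne_zero'.mpr two_pos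
  rw [ω]; field_simp

theorem conj_ω : starRingEnd ℂ ω = -ω ^ 3 := by
  have hs : (√2 : ℂ) ≠ 0 := by exact_mod_cast Real.sqrt_ne_zero'.mpr two_pos
  rw [show ω ^ 3 = ω ^ 2 * ω by ring, ω_sq, ω, map_div₀, map_add, map_one, Complex.conj_I,
    Complex.conj_ofReal]
  field_simp
  linear_combination Complex.I_sq

def ofCoeffs (a b c d : ℤ) : ℂ := a * ω ^ 3 + b * ω ^ 2 + c * ω + d

theorem sqrt_two_mul_ofCoeffs (a b c d : ℤ) :
    (√2 : ℂ) * ofCoeffs a b c d =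
      (((c - a : ℤ) + d * √2 : ℝ) : ℂ) + (((a + c : ℤ) + b * √2 : ℝ) : ℂ) * Complex.I := by
  have h3 : (√2 : ℂ) * ω ^ 3 = -1 + Complex.I := by
    rw [show (√2 : ℂ) * ω ^ 3 = ω ^ 2 * (√2 * ω) by ring, ω_sq, sqrt_two_mul_ω]
    linear_combination Complex.I_sq
  unfold ofCoeffs
  push_cast
  linear_combination (a : ℂ) * h3 + (c : ℂ) * sqrt_two_mul_ω + b * √2 * ω_sq

theorem eq_zero_of_ofCoeffs_eq_zero {a b c d : ℤ} (h : ofCoeffs a b c d = 0) :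
    a = 0 ∧ b = 0 ∧ c = 0 ∧ d = 0 := by
  have h' := sqrt_two_mul_ofCoeffs a b c d
  rw [h, mul_zero, eq_comm] at h'
  obtain ⟨hca, hd⟩ := int_add_int_mul_sqrt_two_eq_zero (x := c - a) (y := d)
    (by simpa using congrArg Complex.re h')
  obtain ⟨hac, hb⟩ := int_add_int_mul_sqrt_two_eq_zero (x := a + c) (y := b)
    (by simpa using congrArg Complex.im h')
  omega

theorem inZω_ofCoeffs_div_two_iff (a b c d : ℤ) :
    inZω (ofCoeffs a b c d / 2) ↔ 2 ∣ a ∧ 2 ∣ b ∧ 2 ∣ c ∧ 2 ∣ d := by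
  constructor
  · rintro ⟨a', b', c', d', h⟩
    have h0 : ofCoeffs (a - 2 * a') (b - 2 * b') (c - 2 * c') (d - 2 * d') = 0 := by
      unfold ofCoeffs at h ⊢
      push_cast
      linear_combination 2 * h
    obtain ⟨ha, hb, hc, hd⟩ := eq_zero_of_ofCoeffs_eq_zero h0
    exact ⟨⟨a', by omega⟩, ⟨b', by omega⟩, ⟨c', by omega⟩, ⟨d', by omega⟩⟩
  · rintro ⟨⟨a', rfl⟩, ⟨b', rfl⟩, ⟨c', rfl⟩, ⟨d', rfl⟩⟩
    exact ⟨a', b', c', d', by unfold ofCoeffs; push_cast; ring⟩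

theorem conj_ofCoeffs (a b c d : ℤ) :
    starRingEnd ℂ (ofCoeffs a b c d) = ofCoeffs (-c) (-b) (-a) d := by
  unfold ofCoeffs
  simp only [map_add, map_mul, map_pow, map_intCast, conj_ω]
  push_cast
  linear_combination (b * ω ^ 2 - a * ω ^ 5 + a * ω) * ω_pow_four

theorem conj_mul_self_ofCoeffs (a b c d : ℤ) :
    starRingEnd ℂ (ofCoeffs a b c d) * ofCoeffs a b c d =
      ofCoeffs (a * d - a * b - b * c - c * d) 0 (-(a * d - a * b - b * c - c * d))
        (a ^ 2 + b ^ 2 + c ^ 2 + d ^ 2) := by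
  rw [conj_ofCoeffs]
  unfold ofCoeffs
  push_cast
  linear_combination (-a * c * ω ^ 2 - (a * b + b * c) * ω - (a ^ 2 + b ^ 2 + c ^ 2)) * ω_pow_four

theorem two_dvd_sum_sq_of_not_two_dvd_cross (a b c d : ℤ)
    (h : ¬ 2 ∣ a * d - a * b - b * c - c * d) : 2 ∣ a ^ 2 + b ^ 2 + c ^ 2 + d ^ 2 := by
  simp only [← even_iff_two_dvd, parity_simps] at h ⊢
  tauto

theorem ofCoeffs_sub_one (a b c d : ℤ) : ofCoeffs a b c d - 1 = ofCoeffs a b c (d - 1) := by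
  unfold ofCoeffs; push_cast; ring

theorem ofCoeffs_sub_ω_add_ω_cube (a b c d : ℤ) :
    ofCoeffs a b c d - (ω + ω ^ 3) = ofCoeffs (a - 1) b (c - 1) d := by
  unfold ofCoeffs; push_cast; ring

end Zω

open Zω in
/-- For every `t ∈ ℤ[ω]`, the element `t̄·t` is congruent modulo `2ℤ[ω]` to exactly one of
`0`, `1`, or `ω + ω³`. -/
theorem stmt3 (t : ℂ) (ht : inZω t) :
    (inZω ((starRingEnd ℂ) t * t / 2)
        ∧ ¬ inZω (((starRingEnd ℂ) t * t - 1) / 2)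
        ∧ ¬ inZω (((starRingEnd ℂ) t * t - (ω + ω ^ 3)) / 2))
    ∨ (¬ inZω ((starRingEnd ℂ) t * t / 2)
        ∧ inZω (((starRingEnd ℂ) t * t - 1) / 2)
        ∧ ¬ inZω (((starRingEnd ℂ) t * t - (ω + ω ^ 3)) / 2))
    ∨ (¬ inZω ((starRingEnd ℂ) t * t / 2)
        ∧ ¬ inZω (((starRingEnd ℂ) t * t - 1) / 2)
        ∧ inZω (((starRingEnd ℂ) t * t - (ω + ω ^ 3)) / 2)) := by
  obtain ⟨a, b, c, d, rfl⟩ := ht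
  have hparity := two_dvd_sum_sq_of_not_two_dvd_cross a b c d
  rw [← ofCoeffs, conj_mul_self_ofCoeffs, ofCoeffs_sub_one, ofCoeffs_sub_ω_add_ω_cube]
  simp only [inZω_ofCoeffs_div_two_iff]
  generalize a * d - a * b - b * c - c * d = A at *
  generalize a ^ 2 + b ^ 2 + c ^ 2 + d ^ 2 = N at *
  omega
end
end

section
/- Let u = (u₁, u₂)ᵀ ∈ 𝔻[ω]² be a vector and let k > 0 be a denominator exponent for u (i.e., √2^k·u₁, √2^k·u₂ ∈ ℤ[ω]). Suppose that x̄₁·x₁ ≡ x̄₂·x₂ (mod 2), where x_j = √2^k·u_j and x̄ denotes complex conjugation. Then there exists a finite sequence of 2×2 matrices U₁, ..., U_h, each equal to H = (1/√2)[[1,1],[1,−1]] or T = diag(1,ω), such that k − 1 is a denominator exponent for v = U₁⋯U_h·u, i.e., √2^(k−1)·v has both entries in ℤ[ω]. -/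
noncomputable section

/-!
Write `x_j = aω³ + bω² + cω + d` and reduce the coefficients modulo 2. Then `x̄x = p + q√2` with
`p ≡ (a + c) + (b + d)` and `q ≡ (a + c)(b + d)`, while `(a + c, b + d) mod 2` is the residue of `x`
modulo `√2`. Hence the hypothesis forces either `√2 ∣ x₁, x₂` (nothing to do), or
`x₁ ≡ ωʲ x₂ (mod 2)` (then `HTʲ` divides both entries by one more `√2`), or
`x₁ + ωᵐ x₂ ≡ 1 + ω + ω² + ω³ (mod 2)`. In the last case the entries of `HTᵐ x` are integral with
residue `1 + ω` modulo `√2`, and all such elements are congruent modulo 2 up to a power of `ω`, so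
the second case applies to `HTᵐ x`. The finitely many residue patterns are checked exhaustively.
-/

open Matrix

lemma sqrt_two_sq : (√2 : ℂ) ^ 2 = 2 := by
  norm_cast
  simp

lemma sqrt_two_ne_zero : (√2 : ℂ) ≠ 0 := by
  simp

lemma sqrt_two_eq : (√2 : ℂ) = ω - ω ^ 3 := by
  rw [show ω ^ 3 = ω ^ 2 * ω by ring, ω_sq, ω]
  field_simp
  linear_combination sqrt_two_sq + Complex.I_sq

lemma sqrt_two_mul_ω : (√2 : ℂ) * ω = 1 + Complex.I := by
  rw [ω, mul_div_cancel₀ _ sqrt_two_ne_zero]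

lemma conj_ω : starRingEnd ℂ ω = -ω ^ 3 := by
  rw [show ω ^ 3 = ω ^ 2 * ω by ring, ω_sq, ω, map_div₀, map_add, map_one, Complex.conj_I,
    Complex.conj_ofReal]
  field_simp
  linear_combination Complex.I_sq

/-- Coordinates `(a, b, c, d)` of `aω³ + bω² + cω + d`, over `ℤ` or modulo 2. -/
abbrev Quad (R : Type*) := R × R × R × R

def ofQuad (x : Quad ℤ) : ℂ := x.1 * ω ^ 3 + x.2.1 * ω ^ 2 + x.2.2.1 * ω + x.2.2.2

namespace Quad

variable {R : Type*} [CommRing R]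

def rot (x : Quad R) : Quad R := (x.2.1, x.2.2.1, x.2.2.2, -x.1)

def sqrtTwoMul (x : Quad R) : Quad R :=
  (x.2.1 - x.2.2.2, x.1 + x.2.2.1, x.2.1 + x.2.2.2, x.2.2.1 - x.1)

def mul (x y : Quad R) : Quad R :=
  (x.1 * y.2.2.2 + x.2.1 * y.2.2.1 + x.2.2.1 * y.2.1 + x.2.2.2 * y.1,
    x.2.1 * y.2.2.2 + x.2.2.1 * y.2.2.1 + x.2.2.2 * y.2.1 - x.1 * y.1,
    x.2.2.1 * y.2.2.2 + x.2.2.2 * y.2.2.1 - x.1 * y.2.1 - x.2.1 * y.1,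
    x.2.2.2 * y.2.2.2 - x.1 * y.2.2.1 - x.2.1 * y.2.1 - x.2.2.1 * y.1)

def conj (x : Quad R) : Quad R := (-x.2.2.1, -x.2.1, -x.1, x.2.2.2)

def sqForm (x : Quad R) : R := x.1 ^ 2 + x.2.1 ^ 2 + x.2.2.1 ^ 2 + x.2.2.2 ^ 2

def crossForm (x : Quad R) : R := x.1 * x.2.1 + x.2.1 * x.2.2.1 + x.2.2.1 * x.2.2.2 - x.2.2.2 * x.1

/-- Over `ZMod 2` this is the residue modulo `√2`. -/
def modSqrtTwo (x : Quad R) : R × R := (x.1 + x.2.2.1, x.2.1 + x.2.2.2)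

def reduce (x : Quad ℤ) : Quad (ZMod 2) := (x.1, x.2.1, x.2.2.1, x.2.2.2)

lemma reduce_rot_iterate (j : ℕ) (x : Quad ℤ) : reduce (rot^[j] x) = rot^[j] (reduce x) := by
  induction j generalizing x with
  | zero => rfl
  | succ j ih =>
    rw [Function.iterate_succ_apply', Function.iterate_succ_apply', ← ih]
    simp [reduce, rot]

lemma reduce_add (x y : Quad ℤ) : reduce (x + y) = reduce x + reduce y := by
  simp [reduce]

lemma reduce_sub_eq_reduce_add (x y : Quad ℤ) : reduce (x - y) = reduce (x + y) := by
  have h (a b : ℤ) : ((a - b : ℤ) : ZMod 2) = ((a + b : ℤ) : ZMod 2) :=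
    (ZMod.intCast_eq_intCast_iff_dvd_sub _ _ 2).2 ⟨b, by ring⟩
  simp only [reduce, Prod.fst_sub, Prod.snd_sub, Prod.fst_add, Prod.snd_add, h]

lemma sqForm_reduce (x : Quad ℤ) : sqForm (reduce x) = sqForm x := by
  simp [sqForm, reduce]

lemma crossForm_reduce (x : Quad ℤ) : crossForm (reduce x) = crossForm x := by
  simp [crossForm, reduce]

lemma exists_sqrtTwoMul_eq {x : Quad ℤ} (h : modSqrtTwo (reduce x) = 0) :
    ∃ y, sqrtTwoMul y = x := by
  obtain ⟨a, b, c, d⟩ := x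
  simp only [modSqrtTwo, reduce, Prod.mk_eq_zero, ← Int.cast_add,
    ZMod.intCast_eq_zero_iff_even] at h
  obtain ⟨⟨s, hs⟩, ⟨t, ht⟩⟩ := h
  refine ⟨(b - t, s, t, s - a), ?_⟩
  simp only [sqrtTwoMul, Prod.mk.injEq]
  omega

lemma modSqrtTwo_reduce_of_reduce_sqrtTwoMul {y : Quad ℤ}
    (h : reduce (sqrtTwoMul y) = (1, 1, 1, 1)) : modSqrtTwo (reduce y) = (1, 1) := by
  simp only [reduce, sqrtTwoMul, Prod.mk.injEq, Int.cast_add, Int.cast_sub] at h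
  simp only [modSqrtTwo, reduce, h]

set_option synthInstance.maxSize 1000 in
theorem residue_trichotomy : ∀ x y : Quad (ZMod 2), sqForm x = sqForm y →
    crossForm x = crossForm y → (modSqrtTwo x = 0 ∧ modSqrtTwo y = 0) ∨
      (∃ j : Fin 4, x = rot^[j] y) ∨ ∃ m : Fin 4, x + rot^[m] y = (1, 1, 1, 1) := by
  decide

set_option synthInstance.maxSize 1000 in
theorem exists_eq_rot_iterate_of_modSqrtTwo : ∀ x y : Quad (ZMod 2), modSqrtTwo x = (1, 1) →
    modSqrtTwo y = (1, 1) → ∃ j : Fin 4, x = rot^[j] y := by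
  decide

end Quad

open Quad

lemma ofQuad_add (x y : Quad ℤ) : ofQuad (x + y) = ofQuad x + ofQuad y := by
  simp only [ofQuad, Prod.fst_add, Prod.snd_add]
  push_cast
  ring

lemma ofQuad_sub (x y : Quad ℤ) : ofQuad (x - y) = ofQuad x - ofQuad y := by
  simp only [ofQuad, Prod.fst_sub, Prod.snd_sub]
  push_cast
  ring

lemma ofQuad_neg (x : Quad ℤ) : ofQuad (-x) = -ofQuad x := by
  simp only [ofQuad, Prod.fst_neg, Prod.snd_neg]
  push_cast
  ring

lemma ofQuad_rot (x : Quad ℤ) : ofQuad (rot x) = ω * ofQuad x := by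
  simp only [ofQuad, rot]
  push_cast
  linear_combination (-x.1 : ℂ) * ω_pow_four

lemma ofQuad_rot_iterate (j : ℕ) (x : Quad ℤ) : ofQuad (rot^[j] x) = ω ^ j * ofQuad x := by
  induction j with
  | zero => simp
  | succ j ih => rw [Function.iterate_succ_apply', ofQuad_rot, ih, pow_succ']; ring

lemma ofQuad_sqrtTwoMul (x : Quad ℤ) : ofQuad (sqrtTwoMul x) = √2 * ofQuad x := by
  rw [sqrt_two_eq]
  simp only [ofQuad, sqrtTwoMul]
  push_cast
  linear_combination (x.2.2.1 - x.1 + x.2.1 * ω + x.1 * ω ^ 2 : ℂ) * ω_pow_four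

lemma ofQuad_mul (x y : Quad ℤ) : ofQuad (mul x y) = ofQuad x * ofQuad y := by
  simp only [ofQuad, mul]
  push_cast
  linear_combination -(x.1 * y.2.2.1 + x.2.1 * y.2.1 + y.1 * x.2.2.1
    + (x.1 * y.2.1 + y.1 * x.2.1) * ω + x.1 * y.1 * ω ^ 2 : ℂ) * ω_pow_four

lemma conj_ofQuad (x : Quad ℤ) : starRingEnd ℂ (ofQuad x) = ofQuad (conj x) := by
  simp only [ofQuad, conj, map_add, map_mul, map_pow, conj_ω, map_intCast]
  push_cast
  linear_combination (-x.1 * ω * (ω ^ 4 - 1) + x.2.1 * ω ^ 2 : ℂ) * ω_pow_four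

lemma conj_mul_self_ofQuad (x : Quad ℤ) :
    starRingEnd ℂ (ofQuad x) * ofQuad x = sqForm x + crossForm x * √2 := by
  rw [conj_ofQuad, ← ofQuad_mul, sqrt_two_eq]
  simp only [ofQuad, mul, conj, sqForm, crossForm]
  push_cast
  ring

lemma int_eq_zero_of_add_mul_sqrt_two_eq_zero {m n : ℤ} (h : (m : ℝ) + n * √2 = 0) :
    m = 0 ∧ n = 0 := by
  obtain rfl | hn := eq_or_ne n 0
  · exact ⟨by exact_mod_cast (by simpa using h : (m : ℝ) = 0), rfl⟩
  · exact absurd h ((irrational_sqrt_two.intCast_mul hn).intCast_add m).ne_zero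

lemma ofQuad_injective : Function.Injective ofQuad := by
  suffices ∀ x, ofQuad x = 0 → x = 0 by
    intro x y hxy
    simpa [sub_eq_zero] using this (x - y) (by rw [ofQuad_sub, hxy, sub_self])
  rintro ⟨a, b, c, d⟩ hx
  have hsplit : √2 * ofQuad (a, b, c, d)
      = (((c - a : ℤ) + d * √2 : ℝ) : ℂ) + (((c + a : ℤ) + b * √2 : ℝ) : ℂ) * Complex.I := by
    have hω : √2 * ofQuad (a, b, c, d)
        = (c + a * Complex.I) * (√2 * ω) + √2 * (d + b * Complex.I) := by
      rw [ofQuad, show ω ^ 3 = ω ^ 2 * ω by ring, ω_sq]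
      ring
    rw [hω, sqrt_two_mul_ω]
    push_cast
    linear_combination (a : ℂ) * Complex.I_sq
  rw [hx, mul_zero, eq_comm] at hsplit
  obtain ⟨hre, him⟩ : ((c - a : ℤ) : ℝ) + d * √2 = 0 ∧ ((c + a : ℤ) : ℝ) + b * √2 = 0 := by
    simpa [Complex.ext_iff] using hsplit
  obtain ⟨h1, rfl⟩ := int_eq_zero_of_add_mul_sqrt_two_eq_zero hre
  obtain ⟨h2, rfl⟩ := int_eq_zero_of_add_mul_sqrt_two_eq_zero him
  obtain ⟨rfl, rfl⟩ : a = 0 ∧ c = 0 := by omega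
  rfl

def Zω : Subring ℂ where
  carrier := Set.range ofQuad
  zero_mem' := ⟨0, by simp [ofQuad]⟩
  one_mem' := ⟨(0, 0, 0, 1), by simp [ofQuad]⟩
  add_mem' := by
    rintro _ _ ⟨x, rfl⟩ ⟨y, rfl⟩
    exact ⟨x + y, ofQuad_add x y⟩
  neg_mem' := by
    rintro _ ⟨x, rfl⟩
    exact ⟨-x, ofQuad_neg x⟩
  mul_mem' := by
    rintro _ _ ⟨x, rfl⟩ ⟨y, rfl⟩
    exact ⟨mul x y, ofQuad_mul x y⟩

lemma ofQuad_mem (x : Quad ℤ) : ofQuad x ∈ Zω := ⟨x, rfl⟩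

lemma mem_Zω_iff {t : ℂ} : t ∈ Zω ↔ inZω t :=
  ⟨fun ⟨x, h⟩ => ⟨x.1, x.2.1, x.2.2.1, x.2.2.2, h.symm⟩,
    fun ⟨a, b, c, d, h⟩ => ⟨(a, b, c, d), h.symm⟩⟩

lemma ω_mem : ω ∈ Zω := ⟨(0, 0, 1, 0), by simp [ofQuad]⟩

lemma div_sqrt_two_mem {x : Quad ℤ} (h : modSqrtTwo (reduce x) = 0) : ofQuad x / √2 ∈ Zω := by
  obtain ⟨y, rfl⟩ := exists_sqrtTwoMul_eq h
  rw [ofQuad_sqrtTwoMul, mul_div_cancel_left₀ _ sqrt_two_ne_zero]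
  exact ofQuad_mem y

lemma exists_div_sqrt_two_of_reduce_eq_ones {s : Quad ℤ} (h : reduce s = (1, 1, 1, 1)) :
    ∃ y, ofQuad s / √2 = ofQuad y ∧ modSqrtTwo (reduce y) = (1, 1) := by
  obtain ⟨y, rfl⟩ := exists_sqrtTwoMul_eq (x := s) (by simp [h, modSqrtTwo]; decide)
  refine ⟨y, ?_, modSqrtTwo_reduce_of_reduce_sqrtTwoMul h⟩
  rw [ofQuad_sqrtTwoMul, mul_div_cancel_left₀ _ sqrt_two_ne_zero]

lemma sub_div_two_mem_of_reduce_eq {x y : Quad ℤ} (h : reduce x = reduce y) :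
    (ofQuad x - ofQuad y) / 2 ∈ Zω := by
  obtain ⟨a, b, c, d⟩ := x
  obtain ⟨a', b', c', d'⟩ := y
  simp only [reduce, Prod.mk.injEq, ZMod.intCast_eq_intCast_iff_dvd_sub, Nat.cast_ofNat] at h
  obtain ⟨⟨p, hp⟩, ⟨q, hq⟩, ⟨r, hr⟩, ⟨s, hs⟩⟩ := h
  obtain ⟨rfl, rfl, rfl, rfl⟩ :
      a' = a + 2 * p ∧ b' = b + 2 * q ∧ c' = c + 2 * r ∧ d' = d + 2 * s := by
    omega
  refine ⟨(-p, -q, -r, -s), ?_⟩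
  simp only [ofQuad]
  push_cast
  ring

lemma sub_ω_pow_mul_div_two_mem {x y : Quad ℤ} {j : ℕ} (h : reduce x = rot^[j] (reduce y)) :
    (ofQuad x - ω ^ j * ofQuad y) / 2 ∈ Zω := by
  rw [← ofQuad_rot_iterate]
  exact sub_div_two_mem_of_reduce_eq (h.trans (reduce_rot_iterate j y).symm)

lemma reduce_forms_eq_of_conj_mul_self_sub_mem {x y : Quad ℤ}
    (h : (starRingEnd ℂ (ofQuad x) * ofQuad x - starRingEnd ℂ (ofQuad y) * ofQuad y) / 2 ∈ Zω) :
    sqForm (reduce x) = sqForm (reduce y) ∧ crossForm (reduce x) = crossForm (reduce y) := by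
  obtain ⟨g, hg⟩ := h
  set p := sqForm x - sqForm y
  set q := crossForm x - crossForm y
  have hpq : ofQuad (-q, 0, q, p) = ofQuad (2 * g.1, 2 * g.2.1, 2 * g.2.2.1, 2 * g.2.2.2) := by
    have h2 : ofQuad (2 * g.1, 2 * g.2.1, 2 * g.2.2.1, 2 * g.2.2.2) = 2 * ofQuad g := by
      simp only [ofQuad]
      push_cast
      ring
    rw [h2, hg, mul_div_cancel₀ _ two_ne_zero, conj_mul_self_ofQuad, conj_mul_self_ofQuad,
      sqrt_two_eq]
    simp only [ofQuad, p, q]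
    push_cast
    ring
  simp only [ofQuad_injective.eq_iff, Prod.mk.injEq] at hpq
  rw [sqForm_reduce, sqForm_reduce, crossForm_reduce, crossForm_reduce,
    ZMod.intCast_eq_intCast_iff_dvd_sub, ZMod.intCast_eq_intCast_iff_dvd_sub]
  exact ⟨⟨-g.2.2.2, by linear_combination -hpq.2.2.2⟩, ⟨-g.2.2.1, by linear_combination -hpq.2.2.1⟩⟩

lemma Tmat_pow (n : ℕ) : Tmat ^ n = !![1, 0; 0, ω ^ n] := by
  induction n with
  | zero => exact (one_fin_two).trans (by simp)
  | succ n ih => rw [pow_succ, ih, Tmat, mul_fin_two, pow_succ]; simp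

lemma HT_pow_mulVec (j : ℕ) (v : Fin 2 → ℂ) :
    (Hmat :: List.replicate j Tmat).prod *ᵥ v
      = ![(v 0 + ω ^ j * v 1) / √2, (v 0 - ω ^ j * v 1) / √2] := by
  rw [List.prod_cons, List.prod_replicate, Tmat_pow, Hmat]
  ext i
  fin_cases i <;> simp [mulVec, dotProduct, Fin.sum_univ_two] <;> ring

/-- For `v = √2ᵏ u` this says that `k - 1` is a denominator exponent of `L.prod *ᵥ u`. -/
def HTReducible (v : Fin 2 → ℂ) : Prop :=
  ∃ L : List (Matrix (Fin 2) (Fin 2) ℂ),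
    (∀ M ∈ L, M = Hmat ∨ M = Tmat) ∧ ∀ i, (L.prod *ᵥ v) i / √2 ∈ Zω

lemma htReducible_of_div_sqrt_two_mem {v : Fin 2 → ℂ} (h : ∀ i, v i / √2 ∈ Zω) :
    HTReducible v :=
  ⟨[], by simp, by simpa using h⟩

lemma HTReducible.of_HT_pow_mulVec {v : Fin 2 → ℂ} (j : ℕ)
    (h : HTReducible ((Hmat :: List.replicate j Tmat).prod *ᵥ v)) : HTReducible v := by
  obtain ⟨L, hL, hv⟩ := h
  refine ⟨L ++ Hmat :: List.replicate j Tmat, ?_, by rwa [List.prod_append, ← mulVec_mulVec]⟩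
  simp only [List.mem_append, List.mem_cons, List.mem_replicate]
  rintro M (hM | rfl | ⟨-, rfl⟩)
  exacts [hL M hM, Or.inl rfl, Or.inr rfl]

lemma htReducible_of_sub_mem {a b : ℂ} (j : ℕ) (hb : b ∈ Zω) (h : (a - ω ^ j * b) / 2 ∈ Zω) :
    HTReducible ![a, b] := by
  apply HTReducible.of_HT_pow_mulVec j
  apply htReducible_of_div_sqrt_two_mem
  have hdiv (z : ℂ) : z / √2 / √2 = z / 2 := by
    rw [div_div, ← sq, sqrt_two_sq]
  rw [HT_pow_mulVec, Fin.forall_fin_two]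
  simp only [cons_val_zero, cons_val_one, hdiv]
  refine ⟨?_, h⟩
  convert add_mem h (mul_mem (pow_mem ω_mem j) hb) using 1
  ring

lemma htReducible_of_reduce_add_eq_ones {x y : Quad ℤ} {m : ℕ}
    (h : reduce (x + rot^[m] y) = (1, 1, 1, 1)) : HTReducible ![ofQuad x, ofQuad y] := by
  obtain ⟨s, hs, hs1⟩ := exists_div_sqrt_two_of_reduce_eq_ones h
  obtain ⟨t, ht, ht1⟩ :=
    exists_div_sqrt_two_of_reduce_eq_ones ((reduce_sub_eq_reduce_add _ _).trans h)
  obtain ⟨j, hj⟩ := exists_eq_rot_iterate_of_modSqrtTwo _ _ hs1 ht1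
  rw [ofQuad_add, ofQuad_rot_iterate] at hs
  rw [ofQuad_sub, ofQuad_rot_iterate] at ht
  apply HTReducible.of_HT_pow_mulVec m
  have hst : (Hmat :: List.replicate m Tmat).prod *ᵥ ![ofQuad x, ofQuad y]
      = ![ofQuad s, ofQuad t] := by
    rw [HT_pow_mulVec]
    simp [hs, ht]
  rw [hst]
  exact htReducible_of_sub_mem j (ofQuad_mem t) (sub_ω_pow_mul_div_two_mem hj)

theorem htReducible_of_conj_mul_self_sub_mem {a b : ℂ} (ha : a ∈ Zω) (hb : b ∈ Zω)
    (h : (starRingEnd ℂ a * a - starRingEnd ℂ b * b) / 2 ∈ Zω) : HTReducible ![a, b] := by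
  obtain ⟨x, rfl⟩ := ha
  obtain ⟨y, rfl⟩ := hb
  obtain ⟨hsq, hcross⟩ := reduce_forms_eq_of_conj_mul_self_sub_mem h
  rcases residue_trichotomy _ _ hsq hcross with ⟨hx, hy⟩ | ⟨j, hj⟩ | ⟨m, hm⟩
  · exact htReducible_of_div_sqrt_two_mem
      (Fin.forall_fin_two.2 ⟨div_sqrt_two_mem hx, div_sqrt_two_mem hy⟩)
  · exact htReducible_of_sub_mem j (ofQuad_mem y) (sub_ω_pow_mul_div_two_mem hj)
  · refine htReducible_of_reduce_add_eq_ones (m := m) ?_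
    rwa [reduce_add, reduce_rot_iterate]

theorem stmt8_general (u : Fin 2 → ℂ) (k : ℕ) (hk : 0 < k)
    (hden : ∀ i, inZω ((Real.sqrt 2 : ℂ) ^ k * u i))
    (h : inZω (((starRingEnd ℂ) ((Real.sqrt 2 : ℂ) ^ k * u 0) * ((Real.sqrt 2 : ℂ) ^ k * u 0)
        - (starRingEnd ℂ) ((Real.sqrt 2 : ℂ) ^ k * u 1) * ((Real.sqrt 2 : ℂ) ^ k * u 1)) / 2)) :
    ∃ L : List (Matrix (Fin 2) (Fin 2) ℂ),
      (∀ M ∈ L, M = Hmat ∨ M = Tmat) ∧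
      ∀ i, inZω ((Real.sqrt 2 : ℂ) ^ (k - 1) * (L.prod.mulVec u) i) := by
  obtain ⟨L, hL, hred⟩ := htReducible_of_conj_mul_self_sub_mem (mem_Zω_iff.2 (hden 0))
    (mem_Zω_iff.2 (hden 1)) (mem_Zω_iff.2 h)
  refine ⟨L, hL, fun i => mem_Zω_iff.1 ?_⟩
  have hv : ![√2 ^ k * u 0, √2 ^ k * u 1] = (√2 : ℂ) ^ k • u := by
    ext i
    fin_cases i <;> rfl
  have hpow : (√2 : ℂ) ^ k = √2 ^ (k - 1) * √2 := by
    rw [← pow_succ, Nat.sub_add_cancel hk]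
  convert hred i using 1
  rw [hv, mulVec_smul, Pi.smul_apply, smul_eq_mul, hpow, mul_assoc,
    mul_div_assoc, mul_div_cancel_left₀ _ sqrt_two_ne_zero]

/-- Row operation lemma: let `u ∈ 𝔻[ω]²` have denominator exponent `k > 0` and suppose
`x̄₁x₁ ≡ x̄₂x₂ (mod 2)` where `x_j = √2^k u_j`. Then there is a finite sequence of matrices,
each equal to `H` or `T`, whose product `U₁⋯U_h` applied to `u` yields a vector with
denominator exponent `k − 1`. -/
theorem stmt8 (u : Fin 2 → ℂ) (hu : ∀ i, inDω (u i)) (k : ℕ) (hk : 0 < k)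
    (hden : ∀ i, inZω ((Real.sqrt 2 : ℂ) ^ k * u i))
    (h : inZω (((starRingEnd ℂ) ((Real.sqrt 2 : ℂ) ^ k * u 0) * ((Real.sqrt 2 : ℂ) ^ k * u 0)
        - (starRingEnd ℂ) ((Real.sqrt 2 : ℂ) ^ k * u 1) * ((Real.sqrt 2 : ℂ) ^ k * u 1)) / 2)) :
    ∃ L : List (Matrix (Fin 2) (Fin 2) ℂ),
      (∀ M ∈ L, M = Hmat ∨ M = Tmat) ∧
      ∀ i, inZω ((Real.sqrt 2 : ℂ) ^ (k - 1) * (L.prod.mulVec u) i) :=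
  stmt8_general u k hk hden h
end
end
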